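/- Let d ≥ 1, ν ∈ (0,2), r ∈ (1/2,1) and S > 0. For every probability density G² on ℝ^d × ℝ^d with first marginal g(v) = ∫_{ℝ^d} G²(v,v₁) dv₁, the following inequality holds in [0,∞]: ∫_{ℝ^d} ∫∫_{ℝ^{2d}} χ_{2S}(|v−v_*|) Ψ_r( χ_S(|v|)² G²(v,v₁), χ_S(|v_*|)² G²(v_*,v₁) ) / |v−v_*|^{r(d+ν)} dv dv_* dv₁ ≥ ∫∫_{ℝ^{2d}} χ_{2S}(|v−v_*|) Ψ_r( χ_S(|v|)² g(v), χ_S(|v_*|)² g(v_*) ) / |v−v_*|^{r(d+ν)} dv dv_*. -/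

import Mathlib

open MeasureTheory ENNReal

noncomputable section

/-- `ℝ^d` as a Euclidean space. -/
abbrev Euc (d : ℕ) := EuclideanSpace ℝ (Fin d)

/-- Japanese bracket `⟨x⟩ = √(1+|x|²)`. -/
def jap {d : ℕ} (x : Euc d) : ℝ := Real.sqrt (1 + ‖x‖^2)

/-- Fractional Sobolev seminorm squared `|f|²_{H^s(ℝ^d)}`, valued in `[0,∞]`. -/
def fracSobolevSq (d : ℕ) (s : ℝ) (f : Euc d → ℝ) : ℝ≥0∞ :=
  ∫⁻ x : Euc d, ∫⁻ y : Euc d, ENNReal.ofReal ((f x - f y)^2 / ‖x - y‖ ^ ((d : ℝ) + 2*s))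

/-- Weighted normalized fractional Fisher information `I^N_{ν,γ}`, valued in `[0,∞]`. -/
def fisherInfo (d N : ℕ) (ν γ : ℝ) (G : (Fin N → Euc d) → ℝ) : ℝ≥0∞ :=
  (N : ℝ≥0∞)⁻¹ * ∑ i : Fin N, ∫⁻ V : Fin N → Euc d, ∫⁻ w : Euc d,
    ENNReal.ofReal ((jap (V i) ^ (γ/2) * Real.sqrt (G V)
      - jap w ^ (γ/2) * Real.sqrt (G (Function.update V i w)))^2
      / ‖V i - w‖ ^ ((d : ℝ) + ν))

/-- A probability density: measurable, nonnegative, total mass one. -/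
def IsProbDensity {α : Type*} [MeasureSpace α] (f : α → ℝ) : Prop :=
  Measurable f ∧ (∀ x, 0 ≤ f x) ∧ ∫⁻ x, ENNReal.ofReal (f x) = 1

/-- A symmetric (exchangeable) probability density on `(ℝ^d)^N`. -/
def IsSymDensity (d N : ℕ) (F : (Fin N → Euc d) → ℝ) : Prop :=
  IsProbDensity F ∧ ∀ (σ : Equiv.Perm (Fin N)) (V : Fin N → Euc d), F (V ∘ σ) = F V

/-- A cutoff function at level `A`: Lipschitz, `[0,1]`-valued on `[0,∞)`, with
`1_{[0,A]} ≤ χ_A ≤ 1_{[0,A+min(1,A)]}`. -/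
def IsCutoff (A : ℝ) (χA : ℝ → ℝ) : Prop :=
  (∃ K : NNReal, LipschitzWith K χA) ∧
  (∀ x : ℝ, 0 ≤ x → 0 ≤ χA x ∧ χA x ≤ 1) ∧
  (∀ x : ℝ, 0 ≤ x → x ≤ A → χA x = 1) ∧
  (∀ x : ℝ, A + min 1 A < x → χA x = 0)

/-- The smooth cutoff functional `α^R_{δ,η}` on probability measures on `ℝ³`,
built from a cutoff family `χ`. -/
def alphaCut (χ : ℝ → ℝ → ℝ) (R δ η : ℝ) (g : Measure (Euc 3)) : ℝ :=
  (1 - χ (η^2/2) (⨆ e : Metric.sphere (0 : Euc 3) 1,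
      ∫ v, ∫ vs, χ R ‖v‖ * χ R ‖vs‖ * χ (2*δ) |(inner ℝ (v - vs) (e : Euc 3) : ℝ)| ∂g ∂g))
    + χ (4*η) (∫ v, χ (R-1) ‖v‖ ∂g)

/-- Wasserstein-1 distance via Kantorovich–Rubinstein duality. -/
def W1 {d : ℕ} (f g : Measure (Euc d)) : ℝ :=
  sSup {t : ℝ | ∃ φ : Euc d → ℝ, LipschitzWith 1 φ ∧
    t = (∫ x, φ x ∂f) - ∫ x, φ x ∂g}

/-- `Ψ_r(x,y) = (√x - √y)^{2r} ((x+y)/2)^{1-r}`. -/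
def Psir (r x y : ℝ) : ℝ :=
  ((Real.sqrt x - Real.sqrt y)^2) ^ r * ((x+y)/2) ^ (1-r)

/-
On the quadrant, `Ψ_r` is the perspective `Ψ_r(x,y) = 2^{r-1} (x+y) ψ((x-y)/(x+y))` of the even
profile `ψ(w) = (1 - √(1-w²))^r`. On `[0,1]`, `ψ(w) = w^{2r} · (1 + √(1-w²))^{-r}` is a product
of two nonnegative nondecreasing convex functions (this needs `1/2 ≤ r ≤ 1`), so `ψ` is convex
on `[-1,1]`. Tangent lines of `ψ` become supporting lines of `Ψ_r` at every point of the open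
quadrant, which gives Jensen's inequality `Ψ_r(∫a, ∫b) ≤ ∫ Ψ_r(a,b)` for nonnegative integrable
`a, b` and any measure; on the axes `Ψ_r` is linear. The theorem is this inequality in `v₁` for
each fixed `(v, v_*)`, followed by Tonelli.
-/

open Set

section Composition
variable {𝕜 E α β : Type*} [Semiring 𝕜] [PartialOrder 𝕜] [AddCommMonoid E] [AddCommMonoid α]
  [PartialOrder α] [AddCommMonoid β] [PartialOrder β] [SMul 𝕜 E] [SMul 𝕜 α] [SMul 𝕜 β]
  {s : Set E} {t : Set β} {f : E → β} {g : β → α}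

lemma ConvexOn.comp_of_mapsTo (hg : ConvexOn 𝕜 t g) (hf : ConvexOn 𝕜 s f)
    (hg' : MonotoneOn g t) (hst : MapsTo f s t) : ConvexOn 𝕜 s (g ∘ f) :=
  ⟨hf.1, fun _ hx _ hy _ _ ha hb hab =>
    (hg' (hst <| hf.1 hx hy ha hb hab) (hg.1 (hst hx) (hst hy) ha hb hab) <|
      hf.2 hx hy ha hb hab).trans <| hg.2 (hst hx) (hst hy) ha hb hab⟩

lemma ConcaveOn.comp_of_mapsTo (hg : ConcaveOn 𝕜 t g) (hf : ConcaveOn 𝕜 s f)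
    (hg' : MonotoneOn g t) (hst : MapsTo f s t) : ConcaveOn 𝕜 s (g ∘ f) :=
  ⟨hf.1, fun _ hx _ hy _ _ ha hb hab =>
    (hg.2 (hst hx) (hst hy) ha hb hab).trans <|
      hg' (hg.1 (hst hx) (hst hy) ha hb hab) (hst <| hf.1 hx hy ha hb hab) <|
        hf.2 hx hy ha hb hab⟩

end Composition

lemma ConcaveOn.convexOn_inv {E : Type*} [AddCommMonoid E] [Module ℝ E] {s : Set E}
    {f : E → ℝ} (hf : ConcaveOn ℝ s f) (hf₀ : ∀ x ∈ s, 0 < f x) :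
    ConvexOn ℝ s fun x => (f x)⁻¹ := by
  refine ⟨hf.1, fun x hx y hy a b ha hb hab => ?_⟩
  have hinv : ConvexOn ℝ (Ioi 0) fun t : ℝ => t⁻¹ := by
    simpa only [zpow_neg_one] using convexOn_zpow (𝕜 := ℝ) (-1)
  have hpos : 0 < a • f x + b • f y := hinv.1 (hf₀ x hx) (hf₀ y hy) ha hb hab
  calc (f (a • x + b • y))⁻¹ ≤ (a • f x + b • f y)⁻¹ :=
        inv_anti₀ hpos (hf.2 hx hy ha hb hab)
    _ ≤ a • (f x)⁻¹ + b • (f y)⁻¹ := hinv.2 (hf₀ x hx) (hf₀ y hy) ha hb hab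

lemma ConvexOn.exists_add_mul_sub_le {S : Set ℝ} {f : ℝ → ℝ} {x : ℝ} (hf : ConvexOn ℝ S f)
    (hx : x ∈ interior S) : ∃ m, ∀ y ∈ S, f x + m * (y - x) ≤ f y := by
  refine ⟨derivWithin f (Ioi x) x, fun y hy => ?_⟩
  rcases lt_trichotomy y x with hyx | rfl | hxy
  · have h := (hf.slope_le_leftDeriv_of_mem_interior hy hx hyx).trans
      (hf.leftDeriv_le_rightDeriv_of_mem_interior hx)
    rw [slope_def_field, div_le_iff₀ (sub_pos.2 hyx)] at h
    linarith
  · simp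
  · have h := hf.rightDeriv_le_slope_of_mem_interior hx hy hxy
    rw [slope_def_field, le_div_iff₀ (sub_pos.2 hxy)] at h
    linarith

lemma concaveOn_sqrt_one_sub_sq : ConcaveOn ℝ (Icc 0 1) fun w : ℝ => √(1 - w ^ 2) := by
  have hsq : ConcaveOn ℝ (Icc 0 1) fun w : ℝ => 1 - w ^ 2 := by
    refine (((convexOn_pow 2).subset Icc_subset_Ici_self (convex_Icc (0:ℝ) 1)).neg.add_const
      1).congr fun w _ => ?_
    simp only [Pi.add_apply, Pi.neg_apply]
    ring
  exact Real.strictConcaveOn_sqrt.concaveOn.comp_of_mapsTo hsq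
    (fun a _ b _ hab => Real.sqrt_le_sqrt hab)
    fun w hw => by simp only [mem_Ici]; nlinarith [hw.1, hw.2]

def psiProfile (r w : ℝ) : ℝ := (1 - √(1 - w ^ 2)) ^ r

lemma psiProfile_abs (r w : ℝ) : psiProfile r |w| = psiProfile r w := by
  simp only [psiProfile, sq_abs]

lemma monotoneOn_psiProfile {r : ℝ} (hr : 0 ≤ r) : MonotoneOn (psiProfile r) (Ici 0) :=
  fun a ha b _ hab => Real.rpow_le_rpow (sub_nonneg.2 (Real.sqrt_le_one.2 (by nlinarith)))
    (by gcongr) hr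

lemma psiProfile_eq_rpow_mul_inv {r w : ℝ} (hw : w ∈ Icc (0:ℝ) 1) :
    psiProfile r w = w ^ (2 * r) * ((1 + √(1 - w ^ 2)) ^ r)⁻¹ := by
  have hc : √(1 - w ^ 2) ^ 2 = 1 - w ^ 2 := Real.sq_sqrt (by nlinarith [hw.1, hw.2])
  have hc0 : 0 ≤ √(1 - w ^ 2) := Real.sqrt_nonneg _
  have h : 1 - √(1 - w ^ 2) = w ^ 2 / (1 + √(1 - w ^ 2)) := by
    field_simp
    nlinarith
  rw [psiProfile, h, Real.div_rpow (sq_nonneg w) (by positivity), div_eq_mul_inv,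
    ← Real.rpow_natCast, ← Real.rpow_mul hw.1]
  norm_num

lemma convexOn_psiProfile_Icc_zero_one {r : ℝ} (hr : r ∈ Icc (1/2 : ℝ) 1) :
    ConvexOn ℝ (Icc 0 1) (psiProfile r) := by
  have hpow : ConvexOn ℝ (Icc 0 1) fun w : ℝ => w ^ (2 * r) :=
    (convexOn_rpow (by linarith [hr.1])).subset Icc_subset_Ici_self (convex_Icc 0 1)
  have hconc : ConcaveOn ℝ (Icc 0 1) fun w : ℝ => (1 + √(1 - w ^ 2)) ^ r :=
    (Real.concaveOn_rpow (by linarith [hr.1]) hr.2).comp_of_mapsTo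
      (concaveOn_sqrt_one_sub_sq.add_const 1 |>.congr fun w _ => add_comm _ _)
      (Real.monotoneOn_rpow_Ici_of_exponent_nonneg (by linarith [hr.1]))
      fun w _ => (by positivity : (0:ℝ) ≤ 1 + √(1 - w ^ 2))
  have hinv := hconc.convexOn_inv fun w _ => by positivity
  refine (hpow.mul hinv (fun w hw => Real.rpow_nonneg hw.1 _) (fun w _ => by positivity) ?_).congr
    fun w hw => (psiProfile_eq_rpow_mul_inv hw).symm
  refine MonotoneOn.monovaryOn
    ((Real.monotoneOn_rpow_Ici_of_exponent_nonneg (by linarith [hr.1])).mono Icc_subset_Ici_self)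
    fun a ha b hb hab => ?_
  show _ ≤ ((1 + √(1 - b ^ 2)) ^ r)⁻¹
  gcongr
  · linarith [hr.1]
  · exact ha.1

lemma convexOn_psiProfile {r : ℝ} (hr : r ∈ Icc (1/2 : ℝ) 1) :
    ConvexOn ℝ (Icc (-1) 1) (psiProfile r) :=
  ((convexOn_psiProfile_Icc_zero_one hr).comp_of_mapsTo
    (convexOn_norm (convex_Icc _ _))
    ((monotoneOn_psiProfile (by linarith [hr.1])).mono Icc_subset_Ici_self)
    fun w hw => ⟨norm_nonneg w, abs_le.2 hw⟩).congr fun w _ => psiProfile_abs r w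

lemma Psir_comm (r x y : ℝ) : Psir r x y = Psir r y x := by
  rw [Psir, Psir, ← neg_sub, neg_sq, add_comm]

lemma Psir_zero_left (r : ℝ) {y : ℝ} (hy : 0 ≤ y) : Psir r 0 y = 2 ^ (r - 1) * y := by
  have h2 : ((1:ℝ) / 2) ^ (1 - r) = 2 ^ (r - 1) := by
    rw [one_div, Real.inv_rpow zero_le_two, ← Real.rpow_neg zero_le_two, neg_sub]
  rw [Psir, Real.sqrt_zero, zero_sub, neg_sq, Real.sq_sqrt hy, zero_add, div_eq_mul_one_div,
    Real.mul_rpow hy (by norm_num), h2, ← mul_assoc, ← Real.rpow_add' hy (by norm_num)]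
  simp [mul_comm]

lemma Psir_eq_mul_psiProfile (r : ℝ) {x y : ℝ} (hx : 0 ≤ x) (hy : 0 ≤ y) (hxy : 0 < x + y) :
    Psir r x y = 2 ^ (r - 1) * ((x + y) * psiProfile r ((x - y) / (x + y))) := by
  have hsx := Real.sq_sqrt hx
  have hsy := Real.sq_sqrt hy
  have hroot : √(1 - ((x - y) / (x + y)) ^ 2) = 2 * √x * √y / (x + y) := by
    rw [← Real.sqrt_sq (by positivity : 0 ≤ 2 * √x * √y / (x + y))]
    congr 1
    field_simp
    nlinarith
  have hbase : 1 - √(1 - ((x - y) / (x + y)) ^ 2) = (√x - √y) ^ 2 / (x + y) := by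
    rw [hroot]
    field_simp
    nlinarith
  have hhalf : ((x + y) / 2) ^ (1 - r) = (x + y) / (x + y) ^ r * 2 ^ (r - 1) := by
    rw [Real.div_rpow hxy.le zero_le_two, Real.rpow_sub hxy, Real.rpow_one,
      Real.rpow_sub zero_lt_two, Real.rpow_sub zero_lt_two, Real.rpow_one]
    field_simp
  rw [Psir, psiProfile, hbase, Real.div_rpow (sq_nonneg _) hxy.le, hhalf]
  ring

lemma exists_affine_le_Psir {r : ℝ} (hr : r ∈ Icc (1/2 : ℝ) 1) {X Y : ℝ} (hX : 0 < X)
    (hY : 0 < Y) : ∃ p q : ℝ, p * X + q * Y = Psir r X Y ∧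
      ∀ x y, 0 ≤ x → 0 ≤ y → p * x + q * y ≤ Psir r x y := by
  set w₀ := (X - Y) / (X + Y)
  have hw₀ : w₀ ∈ interior (Icc (-1) 1) := by
    rw [interior_Icc, mem_Ioo, lt_div_iff₀ (by positivity), div_lt_one (by positivity)]
    constructor <;> linarith
  obtain ⟨m, hm⟩ := (convexOn_psiProfile hr).exists_add_mul_sub_le hw₀
  have hXY : X - Y = w₀ * (X + Y) := (div_mul_cancel₀ _ (by positivity)).symm
  -- the tangent line `w ↦ ψ w₀ + m (w - w₀)` of the profile, put into perspective
  refine ⟨2 ^ (r - 1) * (psiProfile r w₀ - m * w₀ + m),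
    2 ^ (r - 1) * (psiProfile r w₀ - m * w₀ - m), ?_, fun x y hx hy => ?_⟩
  · rw [Psir_eq_mul_psiProfile r hX.le hY.le (by positivity)]
    linear_combination 2 ^ (r - 1) * m * hXY
  rcases (add_nonneg hx hy).eq_or_lt with hxy | hxy
  · obtain ⟨rfl, rfl⟩ : x = 0 ∧ y = 0 := ⟨by linarith, by linarith⟩
    simp [Psir_zero_left r le_rfl]
  have hw : (x - y) / (x + y) ∈ Icc (-1) 1 := by
    rw [mem_Icc, le_div_iff₀ hxy, div_le_one hxy]
    constructor <;> linarith
  have hxy' : x - y = (x - y) / (x + y) * (x + y) := (div_mul_cancel₀ _ hxy.ne').symm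
  calc 2 ^ (r - 1) * (psiProfile r w₀ - m * w₀ + m) * x
        + 2 ^ (r - 1) * (psiProfile r w₀ - m * w₀ - m) * y
      = 2 ^ (r - 1) * ((x + y) * (psiProfile r w₀ + m * ((x - y) / (x + y) - w₀))) := by
        linear_combination 2 ^ (r - 1) * m * hxy'
    _ ≤ 2 ^ (r - 1) * ((x + y) * psiProfile r ((x - y) / (x + y))) := by
        gcongr
        exact hm _ hw
    _ = Psir r x y := (Psir_eq_mul_psiProfile r hx hy hxy).symm

section Jensen

variable {α : Type*} [MeasurableSpace α] {μ : Measure α}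

lemma ofReal_integral_le_lintegral_ofReal {f : α → ℝ} (hf : Integrable f μ) :
    ENNReal.ofReal (∫ x, f x ∂μ) ≤ ∫⁻ x, ENNReal.ofReal (f x) ∂μ :=
  calc ENNReal.ofReal (∫ x, f x ∂μ) ≤ ENNReal.ofReal (∫ x, max (f x) 0 ∂μ) :=
        ENNReal.ofReal_le_ofReal (integral_mono hf hf.pos_part fun x => le_max_left _ _)
    _ = ∫⁻ x, ENNReal.ofReal (max (f x) 0) ∂μ :=
        ofReal_integral_eq_lintegral_ofReal hf.pos_part (ae_of_all _ fun x => le_max_right _ _)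
    _ = ∫⁻ x, ENNReal.ofReal (f x) ∂μ := by
        simp only [ENNReal.ofReal_max, ENNReal.ofReal_zero, max_zero]

variable {a b : α → ℝ} (ha : Integrable a μ) (hb : Integrable b μ) (ha0 : 0 ≤ᵐ[μ] a)
  (hb0 : 0 ≤ᵐ[μ] b)
include ha hb ha0 hb0

lemma ofReal_le_lintegral_of_affine_le {Φ : ℝ → ℝ → ℝ} {p q : ℝ}
    (hpq : p * ∫ x, a x ∂μ + q * ∫ x, b x ∂μ = Φ (∫ x, a x ∂μ) (∫ x, b x ∂μ))
    (hle : ∀ x y, 0 ≤ x → 0 ≤ y → p * x + q * y ≤ Φ x y) :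
    ENNReal.ofReal (Φ (∫ x, a x ∂μ) (∫ x, b x ∂μ))
      ≤ ∫⁻ x, ENNReal.ofReal (Φ (a x) (b x)) ∂μ := by
  rw [← hpq, ← integral_const_mul, ← integral_const_mul,
    ← integral_add (ha.const_mul p) (hb.const_mul q)]
  refine (ofReal_integral_le_lintegral_ofReal ((ha.const_mul p).add (hb.const_mul q))).trans
    (lintegral_mono_ae ?_)
  filter_upwards [ha0, hb0] with x hax hbx
  exact ENNReal.ofReal_le_ofReal (hle _ _ hax hbx)

lemma ofReal_Psir_integral_le_of_integral_eq_zero (r : ℝ) (h : ∫ x, a x ∂μ = 0) :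
    ENNReal.ofReal (Psir r (∫ x, a x ∂μ) (∫ x, b x ∂μ))
      ≤ ∫⁻ x, ENNReal.ofReal (Psir r (a x) (b x)) ∂μ := by
  have ha' : a =ᵐ[μ] 0 := (integral_eq_zero_iff_of_nonneg_ae ha0 ha).1 h
  rw [h, Psir_zero_left r (integral_nonneg_of_ae hb0), ← integral_const_mul]
  refine (ofReal_integral_le_lintegral_ofReal (hb.const_mul _)).trans_eq
    (lintegral_congr_ae ?_)
  filter_upwards [ha', hb0] with x hax hbx
  rw [hax, Pi.zero_apply, Psir_zero_left r hbx]

lemma ofReal_Psir_integral_le {r : ℝ} (hr : r ∈ Icc (1/2 : ℝ) 1) :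
    ENNReal.ofReal (Psir r (∫ x, a x ∂μ) (∫ x, b x ∂μ))
      ≤ ∫⁻ x, ENNReal.ofReal (Psir r (a x) (b x)) ∂μ := by
  rcases (integral_nonneg_of_ae ha0).eq_or_lt with hA | hA
  · exact ofReal_Psir_integral_le_of_integral_eq_zero ha hb ha0 hb0 r hA.symm
  rcases (integral_nonneg_of_ae hb0).eq_or_lt with hB | hB
  · simpa only [Psir_comm r] using
      ofReal_Psir_integral_le_of_integral_eq_zero hb ha hb0 ha0 r hB.symm
  obtain ⟨p, q, hpq, hle⟩ := exists_affine_le_Psir hr hA hB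
  exact ofReal_le_lintegral_of_affine_le ha hb ha0 hb0 hpq hle

lemma ofReal_mul_Psir_integral_le {r : ℝ} (hr : r ∈ Icc (1/2 : ℝ) 1) {C : ℝ} (hC : 0 ≤ C) :
    ENNReal.ofReal (C * Psir r (∫ x, a x ∂μ) (∫ x, b x ∂μ))
      ≤ ∫⁻ x, ENNReal.ofReal (C * Psir r (a x) (b x)) ∂μ := by
  simp only [ENNReal.ofReal_mul hC]
  rw [lintegral_const_mul' _ _ ofReal_ne_top]
  gcongr
  exact ofReal_Psir_integral_le ha hb ha0 hb0 hr

end Jensen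

lemma lintegral_lintegral_lintegral_rotate {α β γ : Type*} [MeasurableSpace α]
    [MeasurableSpace β] [MeasurableSpace γ] {μ : Measure α} {ν : Measure β} {ρ : Measure γ}
    [SFinite μ] [SFinite ν] [SFinite ρ] {f : α → β → γ → ℝ≥0∞}
    (hf : Measurable fun z : α × β × γ => f z.1 z.2.1 z.2.2) :
    ∫⁻ x, ∫⁻ y, ∫⁻ z, f x y z ∂ρ ∂ν ∂μ = ∫⁻ z, ∫⁻ x, ∫⁻ y, f x y z ∂ν ∂μ ∂ρ := by
  have hinner : ∀ x, ∫⁻ y, ∫⁻ z, f x y z ∂ρ ∂ν = ∫⁻ z, ∫⁻ y, f x y z ∂ν ∂ρ := fun x =>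
    lintegral_lintegral_swap (hf.comp (measurable_const.prodMk measurable_id)).aemeasurable
  simp_rw [hinner]
  exact lintegral_lintegral_swap (Measurable.lintegral_prod_right'
    (hf.comp (measurable_fst.fst.prodMk (measurable_snd.prodMk measurable_fst.snd)))).aemeasurable

theorem stmt_18_general (d : ℕ) (ν r S : ℝ)
    (hr : r ∈ Set.Ioo (1/2 : ℝ) 1)
    (χ : ℝ → ℝ → ℝ) (hχS : IsCutoff S (χ S)) (hχ2S : IsCutoff (2*S) (χ (2*S)))
    (G2 : Euc d × Euc d → ℝ) (hG2 : IsProbDensity G2) :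
    (∫⁻ v : Euc d, ∫⁻ vs : Euc d,
        ENNReal.ofReal (χ (2*S) ‖v - vs‖
          * Psir r (χ S ‖v‖^2 * (∫ v₁ : Euc d, G2 (v, v₁)))
                   (χ S ‖vs‖^2 * (∫ v₁ : Euc d, G2 (vs, v₁)))
          / ‖v - vs‖ ^ (r * ((d : ℝ) + ν))))
      ≤ ∫⁻ v₁ : Euc d, ∫⁻ v : Euc d, ∫⁻ vs : Euc d,
          ENNReal.ofReal (χ (2*S) ‖v - vs‖
            * Psir r (χ S ‖v‖^2 * G2 (v, v₁)) (χ S ‖vs‖^2 * G2 (vs, v₁))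
            / ‖v - vs‖ ^ (r * ((d : ℝ) + ν))) := by
  obtain ⟨hGm, hG0, hGmass⟩ := hG2
  obtain ⟨⟨_, hχS_lip⟩, -⟩ := hχS
  obtain ⟨⟨_, hχ2S_lip⟩, hχ2S_mem, -⟩ := hχ2S
  have hsec : ∀ᵐ v : Euc d, Integrable fun v₁ => G2 (v, v₁) := by
    have hGint : Integrable G2 (volume.prod volume) := by
      rw [← Measure.volume_eq_prod]
      refine ⟨hGm.aestronglyMeasurable, ?_⟩
      rw [hasFiniteIntegral_iff_ofReal (ae_of_all _ hG0), hGmass]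
      exact one_lt_top
    exact hGint.prod_right_ae
  refine le_trans (lintegral_mono_ae <| hsec.mono fun v hv => lintegral_mono_ae <|
    hsec.mono fun vs hvs => ?_) (lintegral_lintegral_lintegral_rotate ?_).le
  · simp only [mul_div_right_comm _ (Psir _ _ _), ← integral_const_mul]
    exact ofReal_mul_Psir_integral_le (hv.const_mul _) (hvs.const_mul _)
      (ae_of_all _ fun _ => mul_nonneg (sq_nonneg _) (hG0 _))
      (ae_of_all _ fun _ => mul_nonneg (sq_nonneg _) (hG0 _)) (Ioo_subset_Icc_self hr)
      (div_nonneg (hχ2S_mem _ (norm_nonneg _)).1 (Real.rpow_nonneg (norm_nonneg _) _))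
  · have := hχS_lip.continuous
    have := hχ2S_lip.continuous
    unfold Psir
    fun_prop

/-- Jensen-type inequality: the truncated `Ψ_r`-functional of the first
marginal `g` of a probability density `G²` on `ℝ^d × ℝ^d` is bounded by the corresponding
conditional functional of `G²`. -/
theorem stmt_18 (d : ℕ) (hd : 1 ≤ d) (ν r S : ℝ)
    (hν : ν ∈ Set.Ioo (0 : ℝ) 2) (hr : r ∈ Set.Ioo (1/2 : ℝ) 1) (hS : 0 < S)
    (χ : ℝ → ℝ → ℝ) (hχS : IsCutoff S (χ S)) (hχ2S : IsCutoff (2*S) (χ (2*S)))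
    (G2 : Euc d × Euc d → ℝ) (hG2 : IsProbDensity G2) :
    (∫⁻ v : Euc d, ∫⁻ vs : Euc d,
        ENNReal.ofReal (χ (2*S) ‖v - vs‖
          * Psir r (χ S ‖v‖^2 * (∫ v₁ : Euc d, G2 (v, v₁)))
                   (χ S ‖vs‖^2 * (∫ v₁ : Euc d, G2 (vs, v₁)))
          / ‖v - vs‖ ^ (r * ((d : ℝ) + ν))))
      ≤ ∫⁻ v₁ : Euc d, ∫⁻ v : Euc d, ∫⁻ vs : Euc d,
          ENNReal.ofReal (χ (2*S) ‖v - vs‖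
            * Psir r (χ S ‖v‖^2 * G2 (v, v₁)) (χ S ‖vs‖^2 * G2 (vs, v₁))
            / ‖v - vs‖ ^ (r * ((d : ℝ) + ν))) :=
  stmt_18_general d ν r S hr χ hχS hχ2S G2 hG2
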